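/- arXiv:2307.12373 — 8 statements merged into one kernel-verified Lean document; each statement's English description precedes it below -/
import Mathlib

section
/- Douglas' Lemma: for bounded operators A, B on a Hilbert space H, the following are equivalent: (1) Ran A ⊆ Ran B; (2) AA* ≤ λ² BB* for some λ ≥ 0; (3) there exists a bounded operator C on H with A = BC. -/
/-!
(3) ⇒ (1) is immediate, and (3) ⇒ (2) holds with `λ = ‖C‖` because positivity of
`λ² BB* - AA*` says exactly that `‖A* x‖ ≤ λ ‖B* x‖` for all `x`, while
`‖(BC)* x‖ = ‖C* B* x‖ ≤ ‖C‖ ‖B* x‖`.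

(2) ⇒ (1): given `u`, the bound `‖A* x‖ ≤ λ ‖B* x‖` makes `B* x ↦ ⟪u, A* x⟫` a well-defined
bounded functional on `Ran B*`. Extending it by Hahn–Banach and representing it by Riesz gives
`v` with `⟪v, B* x⟫ = ⟪u, A* x⟫` for all `x`, that is `Bv = Au`.

(1) ⇒ (3): `B` restricted to `(ker B)ᗮ` is injective with the same range as `B`, so `A` lifts
through it to a linear map `C`, whose graph is closed; by the closed graph theorem `C` is bounded.
-/

open ContinuousLinearMap Filter Topology

theorem LinearMap.exists_strongDual_comp_eq_of_norm_le {𝕜 M F : Type*} [RCLike 𝕜]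
    [AddCommGroup M] [Module 𝕜 M] [NormedAddCommGroup F] [NormedSpace 𝕜 F]
    (f : M →ₗ[𝕜] 𝕜) (g : M →ₗ[𝕜] F) (c : ℝ) (h : ∀ x, ‖f x‖ ≤ c * ‖g x‖) :
    ∃ φ : StrongDual 𝕜 F, ∀ x, φ (g x) = f x := by
  have hker : LinearMap.ker g ≤ LinearMap.ker f := fun x hx => by
    simpa [LinearMap.mem_ker.mp hx] using h x
  let f₀ : LinearMap.range g →ₗ[𝕜] 𝕜 :=
    (LinearMap.ker g).liftQ f hker ∘ₗ g.quotKerEquivRange.symm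
  have hf₀ : ∀ x, f₀ ⟨g x, LinearMap.mem_range_self g x⟩ = f x := fun x => by
    simp [f₀, LinearMap.quotKerEquivRange_symm_apply_image]
  have hbound : ∀ v, ‖f₀ v‖ ≤ c * ‖v‖ := by
    rintro ⟨_, x, rfl⟩
    exact (hf₀ x).symm ▸ h x
  obtain ⟨φ, hφ, -⟩ := exists_extension_norm_eq _ (f₀.mkContinuous c hbound)
  exact ⟨φ, fun x => (hφ ⟨g x, LinearMap.mem_range_self g x⟩).trans (hf₀ x)⟩

theorem ContinuousLinearMap.exists_eq_comp_of_range_subset_of_injective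
    {𝕜 E F G : Type*} [NontriviallyNormedField 𝕜]
    [NormedAddCommGroup E] [NormedSpace 𝕜 E] [CompleteSpace E]
    [NormedAddCommGroup F] [NormedSpace 𝕜 F]
    [NormedAddCommGroup G] [NormedSpace 𝕜 G] [CompleteSpace G]
    {A : E →L[𝕜] F} {B : G →L[𝕜] F} (hB : Function.Injective B)
    (h : Set.range A ⊆ Set.range B) : ∃ C : E →L[𝕜] G, A = B ∘L C := by
  let C : E →ₗ[𝕜] G := (LinearEquiv.ofInjective (B : G →ₗ[𝕜] F) hB).symm ∘ₗ
    (A : E →ₗ[𝕜] F).codRestrict (LinearMap.range (B : G →ₗ[𝕜] F)) fun x => h ⟨x, rfl⟩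
  have hBC : ∀ x, B (C x) = A x := fun x =>
    congrArg Subtype.val ((LinearEquiv.ofInjective _ hB).apply_symm_apply _)
  refine ⟨⟨C, C.continuous_of_seq_closed_graph fun u x y hux huy => hB ?_⟩,
    ext fun x => (hBC x).symm⟩
  have hAu : Tendsto (fun n => A (u n)) atTop (𝓝 (A x)) := (A.continuous.tendsto x).comp hux
  have hBCu : Tendsto (fun n => A (u n)) atTop (𝓝 (B y)) := by
    simpa only [Function.comp_def, hBC] using (B.continuous.tendsto y).comp huy
  rw [hBC, tendsto_nhds_unique hBCu hAu]

namespace ContinuousLinearMap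

section RCLike

variable {𝕜 E F G : Type*} [RCLike 𝕜]
  [NormedAddCommGroup E] [InnerProductSpace 𝕜 E]
  [NormedAddCommGroup F] [InnerProductSpace 𝕜 F]
  [NormedAddCommGroup G] [InnerProductSpace 𝕜 G]

theorem inner_comp_adjoint_apply_self [CompleteSpace E] [CompleteSpace F]
    (S : E →L[𝕜] F) (x : F) :
    inner 𝕜 ((S ∘L adjoint S) x) x = (‖adjoint S x‖ ^ 2 : 𝕜) := by
  rw [comp_apply, ← adjoint_inner_right, inner_self_eq_norm_sq_to_K]

theorem norm_adjoint_comp_apply_le [CompleteSpace E] [CompleteSpace F] [CompleteSpace G]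
    (B : G →L[𝕜] F) (C : E →L[𝕜] G) (x : F) :
    ‖adjoint (B ∘L C) x‖ ≤ ‖C‖ * ‖adjoint B x‖ := by
  rw [adjoint_comp, comp_apply, ← LinearIsometryEquiv.norm_map adjoint C]
  exact le_opNorm _ _

theorem injective_comp_orthogonal_ker_subtypeL (B : G →L[𝕜] F) :
    Function.Injective (B ∘L B.kerᗮ.subtypeL) := by
  rw [injective_iff_map_eq_zero]
  rintro ⟨y, hy⟩ hBy
  have hy₀ : y ∈ B.ker ⊓ B.kerᗮ := ⟨hBy, hy⟩
  rw [Submodule.inf_orthogonal_eq_bot, Submodule.mem_bot] at hy₀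
  exact Subtype.ext hy₀

theorem range_comp_orthogonal_ker_subtypeL [CompleteSpace G] (B : G →L[𝕜] F) :
    Set.range (B ∘L B.kerᗮ.subtypeL) = Set.range B := by
  have : CompleteSpace B.ker := B.isClosed_ker.completeSpace_coe
  refine subset_antisymm (fun _ ⟨z, hz⟩ => ⟨z, hz⟩) ?_
  rintro _ ⟨z, rfl⟩
  obtain ⟨y, hy, w, hw, rfl⟩ := B.ker.exists_add_mem_mem_orthogonal z
  have hBy : B y = 0 := hy
  exact ⟨⟨w, hw⟩, by simp [hBy]⟩

theorem exists_eq_comp_of_range_subset [CompleteSpace E] [CompleteSpace G]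
    {A : E →L[𝕜] F} {B : G →L[𝕜] F} (h : Set.range A ⊆ Set.range B) :
    ∃ C : E →L[𝕜] G, A = B ∘L C := by
  obtain ⟨C, hC⟩ := exists_eq_comp_of_range_subset_of_injective
    (injective_comp_orthogonal_ker_subtypeL B) (h.trans (range_comp_orthogonal_ker_subtypeL B).ge)
  exact ⟨B.kerᗮ.subtypeL ∘L C, hC⟩

theorem range_subset_range_of_norm_adjoint_le [CompleteSpace E] [CompleteSpace F]
    [CompleteSpace G] {A : E →L[𝕜] F} {B : G →L[𝕜] F} {c : ℝ}
    (h : ∀ x, ‖adjoint A x‖ ≤ c * ‖adjoint B x‖) : Set.range A ⊆ Set.range B := by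
  rintro _ ⟨u, rfl⟩
  obtain ⟨φ, hφ⟩ := LinearMap.exists_strongDual_comp_eq_of_norm_le
    ((innerSL 𝕜 u ∘L adjoint A : F →L[𝕜] 𝕜) : F →ₗ[𝕜] 𝕜) (adjoint B : F →ₗ[𝕜] G) (‖u‖ * c)
    fun x => calc
      ‖inner 𝕜 u (adjoint A x)‖ ≤ ‖u‖ * ‖adjoint A x‖ := norm_inner_le_norm _ _
      _ ≤ ‖u‖ * (c * ‖adjoint B x‖) := mul_le_mul_of_nonneg_left (h x) (norm_nonneg u)
      _ = ‖u‖ * c * ‖adjoint B x‖ := (mul_assoc _ _ _).symm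
  refine ⟨(InnerProductSpace.toDual 𝕜 G).symm φ, ext_inner_right 𝕜 fun x => ?_⟩
  rw [← adjoint_inner_right, InnerProductSpace.toDual_symm_apply, ← adjoint_inner_right]
  exact hφ x

end RCLike

theorem isPositive_sq_smul_comp_adjoint_sub_iff {E F G : Type*}
    [NormedAddCommGroup E] [InnerProductSpace ℂ E] [CompleteSpace E]
    [NormedAddCommGroup F] [InnerProductSpace ℂ F] [CompleteSpace F]
    [NormedAddCommGroup G] [InnerProductSpace ℂ G] [CompleteSpace G]
    {A : E →L[ℂ] F} {B : G →L[ℂ] F} {l : ℝ} (hl : 0 ≤ l) :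
    ((l ^ 2) • (B ∘L adjoint B) - A ∘L adjoint A).IsPositive ↔
      ∀ x, ‖adjoint A x‖ ≤ l * ‖adjoint B x‖ := by
  have hinner : ∀ x, inner ℂ (((l ^ 2) • (B ∘L adjoint B) - A ∘L adjoint A) x) x
      = (((l * ‖adjoint B x‖) ^ 2 - ‖adjoint A x‖ ^ 2 : ℝ) : ℂ) := fun x => by
    rw [sub_apply, inner_sub_left, smul_apply, RCLike.real_smul_eq_coe_smul (K := ℂ),
      inner_smul_left, inner_comp_adjoint_apply_self, inner_comp_adjoint_apply_self]
    simp only [Complex.coe_algebraMap, map_pow, Complex.conj_ofReal]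
    push_cast
    ring
  rw [isPositive_iff_complex]
  simp only [hinner, RCLike.re_to_complex, Complex.ofReal_re, true_and, sub_nonneg]
  exact forall_congr' fun x => pow_le_pow_iff_left₀ (norm_nonneg _) (by positivity) two_ne_zero

end ContinuousLinearMap

/-- Douglas' Lemma: for bounded operators `A`, `B` on a Hilbert space, the following are
equivalent: (1) `Ran A ⊆ Ran B`; (2) `A A* ≤ λ² B B*` for some `λ ≥ 0`;
(3) there is a bounded `C` with `A = B C`. -/
theorem douglas_lemma
    {H : Type*} [NormedAddCommGroup H] [InnerProductSpace ℂ H] [CompleteSpace H]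
    (A B : H →L[ℂ] H) :
    (Set.range A ⊆ Set.range B ↔
        ∃ l : ℝ, 0 ≤ l ∧ ((l ^ 2) • (B * adjoint B) - A * adjoint A).IsPositive) ∧
      (Set.range A ⊆ Set.range B ↔ ∃ C : H →L[ℂ] H, A = B * C) := by
  have range_iff_factor : Set.range A ⊆ Set.range B ↔ ∃ C : H →L[ℂ] H, A = B * C :=
    ⟨exists_eq_comp_of_range_subset, fun ⟨C, hC⟩ => hC ▸ Set.range_comp_subset_range C B⟩
  refine ⟨range_iff_factor.trans ⟨?_, ?_⟩, range_iff_factor⟩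
  · rintro ⟨C, rfl⟩
    exact ⟨‖C‖, norm_nonneg C, (isPositive_sq_smul_comp_adjoint_sub_iff (norm_nonneg C)).mpr
      (norm_adjoint_comp_apply_le B C)⟩
  · rintro ⟨l, hl, hpos⟩
    exact range_iff_factor.mp
      (range_subset_range_of_norm_adjoint_le ((isPositive_sq_smul_comp_adjoint_sub_iff hl).mp hpos))
end

section
/- Let a₁, a₂ be nonzero complex numbers with |a₁|² + |a₂|² < 1, and let T on H²(𝔻) be defined by T(1) = a₁ z + a₂ z², T(zⁿ) = z^{n+2} for n ≥ 1. Then T is hyponormal, i.e., T*T - TT* ≥ 0. -/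
/-!
Hyponormality of `T` means `‖T* f‖ ≤ ‖T f‖` for every `f`. In the coordinates `cₙ = ⟪eₙ, f⟫`,
`T f = (0, a₁c₀, a₂c₀, c₁, c₂, …)` and `T* f = (ā₁c₁ + ā₂c₂, c₃, c₄, …)`, so by Parseval
`‖T f‖² - ‖T* f‖² = (|a₁|² + |a₂|²)|c₀|² + |c₁|² + |c₂|² - |ā₁c₁ + ā₂c₂|²`, which is nonnegative
by the Cauchy–Schwarz inequality as soon as `|a₁|² + |a₂|² ≤ 1`.
-/

open ContinuousLinearMap

open scoped InnerProductSpace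

namespace ContinuousLinearMap

variable {𝕜 E : Type*} [RCLike 𝕜] [NormedAddCommGroup E] [InnerProductSpace 𝕜 E] [CompleteSpace E]

theorem isPositive_adjoint_mul_self_sub_self_mul_adjoint_iff (T : E →L[𝕜] E) :
    (adjoint T * T - T * adjoint T).IsPositive ↔ ∀ x, ‖adjoint T x‖ ≤ ‖T x‖ := by
  have hsa : IsSelfAdjoint (adjoint T * T - T * adjoint T) := by
    simpa only [star_eq_adjoint] using
      (IsSelfAdjoint.star_mul_self T).sub (IsSelfAdjoint.mul_star_self T)
  have hre (x : E) :
      (adjoint T * T - T * adjoint T).reApplyInnerSelf x = ‖T x‖ ^ 2 - ‖adjoint T x‖ ^ 2 := by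
    rw [apply_norm_sq_eq_inner_adjoint_left, apply_norm_sq_eq_inner_adjoint_left, adjoint_adjoint,
      reApplyInnerSelf_apply, sub_apply, inner_sub_left, map_sub]
    rfl
  simp only [isPositive_def', hsa, true_and, hre, sub_nonneg,
    sq_le_sq₀ (norm_nonneg _) (norm_nonneg _)]

end ContinuousLinearMap

namespace HilbertBasis

variable {ι 𝕜 E : Type*} [RCLike 𝕜] [NormedAddCommGroup E] [InnerProductSpace 𝕜 E]

theorem ext_inner (b : HilbertBasis ι 𝕜 E) {x y : E} (h : ∀ i, ⟪b i, x⟫_𝕜 = ⟪b i, y⟫_𝕜) :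
    x = y :=
  b.repr.injective <| lp.ext <| funext fun i => by simpa only [b.repr_apply_apply] using h i

theorem hasSum_norm_inner_sq (b : HilbertBasis ι 𝕜 E) (x : E) :
    HasSum (fun i => ‖⟪b i, x⟫_𝕜‖ ^ 2) (‖x‖ ^ 2) := by
  simpa [b.repr_apply_apply] using lp.hasSum_norm (p := 2) (by norm_num) (b.repr x)

theorem sum_range_add_tsum_norm_inner_sq (b : HilbertBasis ℕ 𝕜 E) (x : E) (k : ℕ) :
    ∑ i ∈ Finset.range k, ‖⟪b i, x⟫_𝕜‖ ^ 2 + ∑' n, ‖⟪b (n + k), x⟫_𝕜‖ ^ 2 = ‖x‖ ^ 2 :=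
  (b.hasSum_norm_inner_sq x).summable.sum_add_tsum_nat_add k |>.trans
    (b.hasSum_norm_inner_sq x).tsum_eq

end HilbertBasis

theorem norm_mul_add_mul_sq_le {𝕜 : Type*} [NormedDivisionRing 𝕜] (a₁ a₂ z₁ z₂ : 𝕜) :
    ‖a₁ * z₁ + a₂ * z₂‖ ^ 2 ≤ (‖a₁‖ ^ 2 + ‖a₂‖ ^ 2) * (‖z₁‖ ^ 2 + ‖z₂‖ ^ 2) :=
  calc ‖a₁ * z₁ + a₂ * z₂‖ ^ 2 ≤ (‖a₁‖ * ‖z₁‖ + ‖a₂‖ * ‖z₂‖) ^ 2 := by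
        gcongr
        simpa only [norm_mul] using norm_add_le (a₁ * z₁) (a₂ * z₂)
    _ ≤ (‖a₁‖ ^ 2 + ‖a₂‖ ^ 2) * (‖z₁‖ ^ 2 + ‖z₂‖ ^ 2) := by
        nlinarith [sq_nonneg (‖a₁‖ * ‖z₂‖ - ‖a₂‖ * ‖z₁‖)]

namespace ExampleOperator

variable {H : Type*} [NormedAddCommGroup H] [InnerProductSpace ℂ H] [CompleteSpace H]
  {e : HilbertBasis ℕ ℂ H} {a₁ a₂ : ℂ} {T : H →L[ℂ] H}

theorem inner_zero_adjoint_apply (hT0 : T (e 0) = a₁ • e 1 + a₂ • e 2) (f : H) :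
    ⟪e 0, adjoint T f⟫_ℂ = starRingEnd ℂ a₁ * ⟪e 1, f⟫_ℂ + starRingEnd ℂ a₂ * ⟪e 2, f⟫_ℂ := by
  rw [adjoint_inner_right, hT0, inner_add_left, inner_smul_left, inner_smul_left]

theorem inner_succ_adjoint_apply (hTn : ∀ n : ℕ, 1 ≤ n → T (e n) = e (n + 2)) (n : ℕ) (f : H) :
    ⟪e (n + 1), adjoint T f⟫_ℂ = ⟪e (n + 3), f⟫_ℂ := by
  rw [adjoint_inner_right, hTn (n + 1) n.succ_pos]

theorem adjoint_apply_basis_zero (hT0 : T (e 0) = a₁ • e 1 + a₂ • e 2)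
    (hTn : ∀ n : ℕ, 1 ≤ n → T (e n) = e (n + 2)) : adjoint T (e 0) = 0 := by
  refine e.ext_inner fun m => ?_
  rcases m with _ | m <;>
    simp [inner_zero_adjoint_apply hT0, inner_succ_adjoint_apply hTn,
      orthonormal_iff_ite.1 e.orthonormal]

theorem adjoint_apply_basis_one (hT0 : T (e 0) = a₁ • e 1 + a₂ • e 2)
    (hTn : ∀ n : ℕ, 1 ≤ n → T (e n) = e (n + 2)) :
    adjoint T (e 1) = starRingEnd ℂ a₁ • e 0 := by
  refine e.ext_inner fun m => ?_
  rcases m with _ | m <;>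
    simp [inner_zero_adjoint_apply hT0, inner_succ_adjoint_apply hTn, inner_smul_right,
      orthonormal_iff_ite.1 e.orthonormal, e.orthonormal.1]

theorem adjoint_apply_basis_two (hT0 : T (e 0) = a₁ • e 1 + a₂ • e 2)
    (hTn : ∀ n : ℕ, 1 ≤ n → T (e n) = e (n + 2)) :
    adjoint T (e 2) = starRingEnd ℂ a₂ • e 0 := by
  refine e.ext_inner fun m => ?_
  rcases m with _ | m <;>
    simp [inner_zero_adjoint_apply hT0, inner_succ_adjoint_apply hTn, inner_smul_right,
      orthonormal_iff_ite.1 e.orthonormal, e.orthonormal.1]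

theorem adjoint_apply_basis_add_three (hT0 : T (e 0) = a₁ • e 1 + a₂ • e 2)
    (hTn : ∀ n : ℕ, 1 ≤ n → T (e n) = e (n + 2)) (n : ℕ) :
    adjoint T (e (n + 3)) = e (n + 1) := by
  refine e.ext_inner fun m => ?_
  rcases m with _ | m <;>
    simp [inner_zero_adjoint_apply hT0, inner_succ_adjoint_apply hTn,
      orthonormal_iff_ite.1 e.orthonormal]

theorem norm_apply_sq (hT0 : T (e 0) = a₁ • e 1 + a₂ • e 2)
    (hTn : ∀ n : ℕ, 1 ≤ n → T (e n) = e (n + 2)) (f : H) :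
    ‖T f‖ ^ 2 = (‖a₁‖ ^ 2 + ‖a₂‖ ^ 2) * ‖⟪e 0, f⟫_ℂ‖ ^ 2 + (‖f‖ ^ 2 - ‖⟪e 0, f⟫_ℂ‖ ^ 2) := by
  rw [← e.sum_range_add_tsum_norm_inner_sq (T f) 3, ← e.sum_range_add_tsum_norm_inner_sq f 1]
  simp_rw [← adjoint_inner_left]
  simp only [Finset.sum_range_succ, Finset.sum_range_zero, adjoint_apply_basis_zero hT0 hTn,
    adjoint_apply_basis_one hT0 hTn, adjoint_apply_basis_two hT0 hTn,
    adjoint_apply_basis_add_three hT0 hTn, inner_zero_left, norm_zero, inner_smul_left, norm_mul,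
    Complex.norm_conj]
  ring

theorem norm_adjoint_apply_sq (hT0 : T (e 0) = a₁ • e 1 + a₂ • e 2)
    (hTn : ∀ n : ℕ, 1 ≤ n → T (e n) = e (n + 2)) (f : H) :
    ‖adjoint T f‖ ^ 2 = ‖starRingEnd ℂ a₁ * ⟪e 1, f⟫_ℂ + starRingEnd ℂ a₂ * ⟪e 2, f⟫_ℂ‖ ^ 2 +
      (‖f‖ ^ 2 - ‖⟪e 0, f⟫_ℂ‖ ^ 2 - ‖⟪e 1, f⟫_ℂ‖ ^ 2 - ‖⟪e 2, f⟫_ℂ‖ ^ 2) := by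
  rw [← e.sum_range_add_tsum_norm_inner_sq (adjoint T f) 1,
    ← e.sum_range_add_tsum_norm_inner_sq f 3]
  simp only [Finset.sum_range_succ, Finset.sum_range_zero, inner_zero_adjoint_apply hT0,
    inner_succ_adjoint_apply hTn]
  ring

theorem norm_adjoint_apply_le_norm_apply (hT0 : T (e 0) = a₁ • e 1 + a₂ • e 2)
    (hTn : ∀ n : ℕ, 1 ≤ n → T (e n) = e (n + 2)) (ha : ‖a₁‖ ^ 2 + ‖a₂‖ ^ 2 ≤ 1) (f : H) :
    ‖adjoint T f‖ ≤ ‖T f‖ := by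
  rw [← sq_le_sq₀ (norm_nonneg _) (norm_nonneg _), norm_apply_sq hT0 hTn,
    norm_adjoint_apply_sq hT0 hTn]
  have hcs := norm_mul_add_mul_sq_le (starRingEnd ℂ a₁) (starRingEnd ℂ a₂) ⟪e 1, f⟫_ℂ ⟪e 2, f⟫_ℂ
  rw [Complex.norm_conj, Complex.norm_conj] at hcs
  have hc₀ : 0 ≤ (‖a₁‖ ^ 2 + ‖a₂‖ ^ 2) * ‖⟪e 0, f⟫_ℂ‖ ^ 2 := by positivity
  linarith [hcs.trans (mul_le_of_le_one_left (by positivity) ha)]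

end ExampleOperator

theorem example_operator_hyponormal_general
    {H : Type*} [NormedAddCommGroup H] [InnerProductSpace ℂ H] [CompleteSpace H]
    (e : HilbertBasis ℕ ℂ H) (a₁ a₂ : ℂ)
    (hlt : ‖a₁‖ ^ 2 + ‖a₂‖ ^ 2 < 1)
    (T : H →L[ℂ] H)
    (hT0 : T (e 0) = a₁ • e 1 + a₂ • e 2)
    (hTn : ∀ n : ℕ, 1 ≤ n → T (e n) = e (n + 2)) :
    (adjoint T * T - T * adjoint T).IsPositive :=
  (isPositive_adjoint_mul_self_sub_self_mul_adjoint_iff T).2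
    (ExampleOperator.norm_adjoint_apply_le_norm_apply hT0 hTn hlt.le)

/-- If `|a₁|² + |a₂|² < 1` (with `a₁, a₂ ≠ 0`) and `T 1 = a₁ z + a₂ z²`,
`T zⁿ = z^{n+2}` for `n ≥ 1`, then `T` is hyponormal: `T*T - TT* ≥ 0`. -/
theorem example_operator_hyponormal
    {H : Type*} [NormedAddCommGroup H] [InnerProductSpace ℂ H] [CompleteSpace H]
    (e : HilbertBasis ℕ ℂ H) (a₁ a₂ : ℂ) (ha₁ : a₁ ≠ 0) (ha₂ : a₂ ≠ 0)
    (hlt : ‖a₁‖ ^ 2 + ‖a₂‖ ^ 2 < 1)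
    (T : H →L[ℂ] H)
    (hT0 : T (e 0) = a₁ • e 1 + a₂ • e 2)
    (hTn : ∀ n : ℕ, 1 ≤ n → T (e n) = e (n + 2)) :
    (adjoint T * T - T * adjoint T).IsPositive :=
  example_operator_hyponormal_general e a₁ a₂ hlt T hT0 hTn
end

section
/- Let a₁, a₂ be nonzero complex numbers with |a₁|² + |a₂|² < 1, and let T on H²(𝔻) be defined by T(1) = a₁ z + a₂ z², T(zⁿ) = z^{n+2} for n ≥ 1. Then T is analytic: ⋂_{n≥1} Tⁿ(H²(𝔻)) = {0}. -/
/-!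
With respect to the basis `zⁿ`, `T` is strictly lower triangular: `T zʲ` is orthogonal to `zᵏ`
for every `k ≤ j`. Hence `T` raises the order of vanishing at the origin by at least one, so
every vector in the range of `Tⁿ⁺¹` is orthogonal to `1, z, …, zⁿ`, and a vector in all these
ranges has no nonzero Fourier coefficient.
-/

namespace HilbertBasis

variable {𝕜 H : Type*} [RCLike 𝕜] [NormedAddCommGroup H] [InnerProductSpace 𝕜 H]
  (e : HilbertBasis ℕ 𝕜 H) {T : H →L[𝕜] H}

theorem eq_zero_of_forall_inner_eq_zero {x : H} (hx : ∀ k, inner 𝕜 (e k) x = 0) : x = 0 := by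
  have hsum := e.hasSum_repr x
  simp only [e.repr_apply_apply, hx, zero_smul] at hsum
  exact hsum.unique hasSum_zero

variable (hT : ∀ j k, k ≤ j → inner 𝕜 (e k) (T (e j)) = 0)
include hT

theorem inner_apply_eq_zero_of_inner_eq_zero {w : H} {m : ℕ}
    (hw : ∀ k < m, inner 𝕜 (e k) w = 0) {k : ℕ} (hk : k ≤ m) :
    inner 𝕜 (e k) (T w) = 0 := by
  have hsum : HasSum (fun j => e.repr w j * inner 𝕜 (e k) (T (e j))) (inner 𝕜 (e k) (T w)) := by
    simpa only [map_smul, innerSL_apply_apply, smul_eq_mul] using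
      (innerSL 𝕜 (e k)).hasSum (T.hasSum (e.hasSum_repr w))
  refine hsum.unique (hasSum_zero.congr_fun fun j => ?_)
  rcases lt_or_ge j m with hj | hj
  · rw [e.repr_apply_apply, hw j hj, zero_mul]
  · rw [hT j k (hk.trans hj), mul_zero]

theorem inner_pow_succ_apply_eq_zero (n : ℕ) (z : H) {k : ℕ} (hk : k ≤ n) :
    inner 𝕜 (e k) ((T ^ (n + 1)) z) = 0 := by
  induction n generalizing k with
  | zero => exact e.inner_apply_eq_zero_of_inner_eq_zero hT (m := 0) (by simp) hk
  | succ n ih =>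
    rw [pow_succ']
    exact e.inner_apply_eq_zero_of_inner_eq_zero hT (fun k hk => ih (Nat.le_of_lt_succ hk)) hk

theorem iInter_range_pow_succ_eq_zero : ⋂ n : ℕ, Set.range ⇑(T ^ (n + 1)) = {0} := by
  refine Set.eq_singleton_iff_unique_mem.mpr ⟨Set.mem_iInter.mpr fun n => ⟨0, map_zero _⟩, ?_⟩
  intro x hx
  refine e.eq_zero_of_forall_inner_eq_zero fun k => ?_
  obtain ⟨z, rfl⟩ := Set.mem_iInter.mp hx k
  exact e.inner_pow_succ_apply_eq_zero hT k z le_rfl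

end HilbertBasis

theorem example_operator_analytic_general
    {H : Type*} [NormedAddCommGroup H] [InnerProductSpace ℂ H]
    (e : HilbertBasis ℕ ℂ H) (a₁ a₂ : ℂ)
    (T : H →L[ℂ] H)
    (hT0 : T (e 0) = a₁ • e 1 + a₂ • e 2)
    (hTn : ∀ n : ℕ, 1 ≤ n → T (e n) = e (n + 2)) :
    (⋂ n : ℕ, Set.range (⇑(T ^ (n + 1)))) = {0} := by
  have orth := orthonormal_iff_ite.mp e.orthonormal
  refine e.iInter_range_pow_succ_eq_zero fun j k hkj => ?_
  rcases Nat.eq_zero_or_pos j with rfl | hj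
  · rw [Nat.le_zero.mp hkj, hT0, inner_add_right, inner_smul_right, inner_smul_right,
      orth, orth]
    simp
  · rw [hTn j hj, orth, if_neg (by omega)]

/-- If `|a₁|² + |a₂|² < 1` (with `a₁, a₂ ≠ 0`) and `T 1 = a₁ z + a₂ z²`,
`T zⁿ = z^{n+2}` for `n ≥ 1`, then `T` is analytic: `⋂_{n≥1} Tⁿ H = {0}`. -/
theorem example_operator_analytic
    {H : Type*} [NormedAddCommGroup H] [InnerProductSpace ℂ H] [CompleteSpace H]
    (e : HilbertBasis ℕ ℂ H) (a₁ a₂ : ℂ) (ha₁ : a₁ ≠ 0) (ha₂ : a₂ ≠ 0)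
    (hlt : ‖a₁‖ ^ 2 + ‖a₂‖ ^ 2 < 1)
    (T : H →L[ℂ] H)
    (hT0 : T (e 0) = a₁ • e 1 + a₂ • e 2)
    (hTn : ∀ n : ℕ, 1 ≤ n → T (e n) = e (n + 2)) :
    (⋂ n : ℕ, Set.range (⇑(T ^ (n + 1)))) = {0} :=
  example_operator_analytic_general e a₁ a₂ T hT0 hTn
end

section
/- Let T on H²(𝔻) be defined by T(1) = T(z) = 1/2 and T(z^m) = z^{m+1} for m ≥ 2. Then the constant function 1 belongs to T^m H²(𝔻) for every m ≥ 1; in particular T is not analytic. -/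
open ContinuousLinearMap

/-- For `T 1 = T z = 1/2`, `T z^m = z^{m+1}` (`m ≥ 2`): the constant function `1`
belongs to `T^m H` for every `m ≥ 1`; in particular `T` is not analytic. -/
theorem counterexample_not_analytic
    {H : Type*} [NormedAddCommGroup H] [InnerProductSpace ℂ H] [CompleteSpace H]
    (e : HilbertBasis ℕ ℂ H) (T : H →L[ℂ] H)
    (hT0 : T (e 0) = (1 / 2 : ℂ) • e 0) (hT1 : T (e 1) = (1 / 2 : ℂ) • e 0)
    (hTm : ∀ m : ℕ, 2 ≤ m → T (e m) = e (m + 1)) :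
    (∀ m : ℕ, 1 ≤ m → e 0 ∈ Set.range (⇑(T ^ m))) ∧
      (⋂ n : ℕ, Set.range (⇑(T ^ (n + 1)))) ≠ {0} := by
  have key : ∀ m : ℕ, (T ^ m) ((2 : ℂ) ^ m • e 0) = e 0 := by
    intro m
    induction m with
    | zero => simp
    | succ n ih =>
      have step : T ((2 : ℂ) ^ (n + 1) • e 0) = (2 : ℂ) ^ n • e 0 := by
        rw [map_smul, hT0, smul_smul]
        norm_num
        ring_nf
      rw [pow_succ, ContinuousLinearMap.mul_apply, step, ih]
  have hmem : ∀ m : ℕ, e 0 ∈ Set.range (⇑(T ^ m)) := fun m => ⟨_, key m⟩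
  refine ⟨fun m _ => hmem m, ?_⟩
  intro h
  have h0 : e 0 ∈ (⋂ n : ℕ, Set.range (⇑(T ^ (n + 1)))) :=
    Set.mem_iInter.mpr fun n => hmem (n + 1)
  rw [h] at h0
  have hn : ‖e 0‖ = 1 := e.orthonormal.1 0
  simp only [Set.mem_singleton_iff] at h0
  beta_reduce at hn
  rw [h0] at hn
  simp at hn
end

section
/- Let T = F₁ + S_k(I−P_n) with F₁(I−P_n) = 0 and (I−P_{n+k})F₁ = 0, and define F_r = F₁^r + S_k(I−P_n)F₁^{r−1} + ⋯ + S_k^{r−1}(I−P_n)F₁ for r ≥ 2 (F₁ for r = 1). Then T^r = F_r + S_k^r(I−P_n) for all r ≥ 1. -/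
/-! With `A = S_k (I - P_n)`, the basis computation `P_n A = 0` together with `F₁ = F₁ P_n` gives
`F₁ A = 0` and `(I - P_n) A = A`. Expanding `T^{r+1} = T^r T` inductively, every cross term
ending in `F₁ A` vanishes and `S_k^r (I - P_n) A = S_k^{r+1} (I - P_n)`, which leaves the
recursion `F_{r+1} = F_r F₁ + S_k^r (I - P_n) F₁`. -/

section Ring

variable {R : Type*} [Ring R] {F₁ S P : R}

lemma pow_mul_eq_zero_of_mul_eq_zero {a b : R} (h : a * b = 0) {r : ℕ} (hr : r ≠ 0) :
    a ^ r * b = 0 := by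
  obtain ⟨s, rfl⟩ := Nat.exists_eq_succ_of_ne_zero hr
  rw [pow_succ, mul_assoc, h, mul_zero]

lemma mul_mul_sub_eq_zero (hF₁ : F₁ * (1 - P) = 0) (hP : P * (S * (1 - P)) = 0) :
    F₁ * (S * (1 - P)) = 0 := by
  have hF₁P : F₁ = F₁ * P := by rwa [mul_sub, mul_one, sub_eq_zero] at hF₁
  rw [hF₁P, mul_assoc, hP, mul_zero]

lemma pow_add_sum_Ico_mul_eq_zero (hF₁ : F₁ * (1 - P) = 0) (hP : P * (S * (1 - P)) = 0)
    {r : ℕ} (hr : 1 ≤ r) :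
    (F₁ ^ r + ∑ j ∈ Finset.Ico 1 r, S ^ j * (1 - P) * F₁ ^ (r - j)) * (S * (1 - P)) = 0 := by
  have hA := mul_mul_sub_eq_zero hF₁ hP
  rw [add_mul, Finset.sum_mul, pow_mul_eq_zero_of_mul_eq_zero hA (by omega), zero_add]
  refine Finset.sum_eq_zero fun j hj => ?_
  have hj : r - j ≠ 0 := by simp only [Finset.mem_Ico] at hj; omega
  rw [mul_assoc, pow_mul_eq_zero_of_mul_eq_zero hA hj, mul_zero]

lemma pow_add_sum_Ico_succ {r : ℕ} (hr : 1 ≤ r) :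
    F₁ ^ (r + 1) + ∑ j ∈ Finset.Ico 1 (r + 1), S ^ j * (1 - P) * F₁ ^ (r + 1 - j) =
      (F₁ ^ r + ∑ j ∈ Finset.Ico 1 r, S ^ j * (1 - P) * F₁ ^ (r - j)) * F₁ +
        S ^ r * (1 - P) * F₁ := by
  have hterm : ∀ j ∈ Finset.Ico 1 r,
      S ^ j * (1 - P) * F₁ ^ (r + 1 - j) = S ^ j * (1 - P) * F₁ ^ (r - j) * F₁ := by
    intro j hj
    simp only [Finset.mem_Ico] at hj
    rw [mul_assoc _ (F₁ ^ (r - j)), ← pow_succ, Nat.sub_add_comm hj.2.le]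
  rw [Finset.sum_Ico_succ_top hr, Finset.sum_congr rfl hterm, Nat.add_sub_cancel_left, pow_one,
    add_mul, Finset.sum_mul, ← pow_succ, add_assoc]

theorem add_mul_sub_pow (hF₁ : F₁ * (1 - P) = 0) (hP : P * (S * (1 - P)) = 0) {r : ℕ}
    (hr : 1 ≤ r) :
    (F₁ + S * (1 - P)) ^ r =
      F₁ ^ r + ∑ j ∈ Finset.Ico 1 r, S ^ j * (1 - P) * F₁ ^ (r - j) + S ^ r * (1 - P) := by
  induction r, hr using Nat.le_induction with
  | base => simp
  | succ r hr ih =>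
    have hQ : (1 - P) * (S * (1 - P)) = S * (1 - P) := by rw [sub_mul, one_mul, hP, sub_zero]
    rw [pow_succ, ih, pow_add_sum_Ico_succ hr, add_mul, mul_add, mul_add,
      pow_add_sum_Ico_mul_eq_zero hF₁ hP hr, mul_assoc (S ^ r) (1 - P) (S * (1 - P)), hQ,
      ← mul_assoc, ← pow_succ]
    abel

end Ring

lemma HilbertBasis.proj_mul_shift_mul_sub_proj_eq_zero {H : Type*} [NormedAddCommGroup H]
    [InnerProductSpace ℂ H] (e : HilbertBasis ℕ ℂ H) {n k : ℕ} {S P : H →L[ℂ] H}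
    (hS : ∀ m, S (e m) = e (m + k)) (hP : ∀ m, P (e m) = if m < n then e m else 0) :
    P * (S * (1 - P)) = 0 := by
  refine ContinuousLinearMap.ext_on
    ((Submodule.dense_iff_topologicalClosure_eq_top).2 e.dense_span) ?_
  rintro _ ⟨m, rfl⟩
  by_cases hm : m < n
  · simp [hP, hm]
  · have hmk : ¬ m + k < n := by omega
    simp [hP, hS, hm, hmk]

theorem powers_of_T_formula_general
    {H : Type*} [NormedAddCommGroup H] [InnerProductSpace ℂ H]
    (e : HilbertBasis ℕ ℂ H) (n k : ℕ)
    (Sk Pn F₁ T : H →L[ℂ] H) (F : ℕ → H →L[ℂ] H)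
    (hSk : ∀ m : ℕ, Sk (e m) = e (m + k))
    (hPn : ∀ m : ℕ, Pn (e m) = if m < n then e m else 0)
    (hF1 : F₁ * (1 - Pn) = 0)
    (hT : T = F₁ + Sk * (1 - Pn))
    (hF : ∀ r : ℕ, F r = F₁ ^ r + ∑ j ∈ Finset.Ico 1 r, Sk ^ j * (1 - Pn) * F₁ ^ (r - j)) :
    ∀ r : ℕ, 1 ≤ r → T ^ r = F r + Sk ^ r * (1 - Pn) := by
  intro r hr
  rw [hT, hF, add_mul_sub_pow hF1 (e.proj_mul_shift_mul_sub_proj_eq_zero hSk hPn) hr]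

/-- With `T = F₁ + S_k (I - P_n)` (where `F₁ (I - P_n) = 0`, `(I - P_{n+k}) F₁ = 0`) and
`F_r = F₁^r + S_k (I-P_n) F₁^{r-1} + ⋯ + S_k^{r-1} (I-P_n) F₁` (`F_1 = F₁`),
one has `T^r = F_r + S_k^r (I - P_n)` for all `r ≥ 1`. -/
theorem powers_of_T_formula
    {H : Type*} [NormedAddCommGroup H] [InnerProductSpace ℂ H] [CompleteSpace H]
    (e : HilbertBasis ℕ ℂ H) (n k : ℕ) (hk : 1 ≤ k)
    (Sk Pn Pnk F₁ T : H →L[ℂ] H) (F : ℕ → H →L[ℂ] H)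
    (hSk : ∀ m : ℕ, Sk (e m) = e (m + k))
    (hPn : ∀ m : ℕ, Pn (e m) = if m < n then e m else 0)
    (hPnk : ∀ m : ℕ, Pnk (e m) = if m < n + k then e m else 0)
    (hF1 : F₁ * (1 - Pn) = 0) (hF2 : (1 - Pnk) * F₁ = 0)
    (hT : T = F₁ + Sk * (1 - Pn))
    (hF : ∀ r : ℕ, F r = F₁ ^ r + ∑ j ∈ Finset.Ico 1 r, Sk ^ j * (1 - Pn) * F₁ ^ (r - j)) :
    ∀ r : ℕ, 1 ≤ r → T ^ r = F r + Sk ^ r * (1 - Pn) :=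
  powers_of_T_formula_general e n k Sk Pn F₁ T F hSk hPn hF1 hT hF
end

section
/- Let T be a contraction on H of the form T = F₁ + S_k(I−P_n) with F₁(I−P_n) = 0 and (I−P_{n+k})F₁ = 0. Then T is hyponormal if and only if ‖F₁*x‖² − ‖F₁x‖² ≤ ‖P_{n+k}x‖² − ‖P_n x‖² for all x ∈ H. -/
/-!
Write `Q = 1 - P_n`. The support conditions on `F₁` kill the cross terms `F₁* S_k Q` and
`F₁ Q S_k*`, while `S_k* S_k = 1` and `S_k Q S_k* = 1 - P_{n+k}`; hence
`T*T - TT* = F₁*F₁ - F₁F₁* + (P_{n+k} - P_n)`. Since `P_n` and `P_{n+k}` are orthogonal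
projections, the quadratic form of the right-hand side at `x` is
`‖F₁ x‖² - ‖F₁* x‖² + ‖P_{n+k} x‖² - ‖P_n x‖²`.
-/

open ContinuousLinearMap

theorem star_mul_self_sub_mul_star_add_mul_one_sub {R : Type*} [Ring R] [StarRing R]
    {F S P P' : R} (hP : IsStarProjection P) (hFP : F * (1 - P) = 0)
    (hP'F : (1 - P') * F = 0) (hS : star S * S = 1) (hSPS : S * (1 - P) * star S = 1 - P') :
    star (F + S * (1 - P)) * (F + S * (1 - P)) - (F + S * (1 - P)) * star (F + S * (1 - P)) =
      star F * F - F * star F + (P' - P) := by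
  set Q := 1 - P
  have hQstar : star Q = Q := hP.one_sub.isSelfAdjoint
  have hQQ : Q * Q = Q := hP.one_sub.isIdempotentElem
  -- `1 - P' = S Q S*` is self-adjoint, so `F* (1 - P') = 0`; and `S Q = (1 - P') S` as `S* S = 1`
  have hP'star : star (1 - P') = 1 - P' := by
    rw [← hSPS, star_mul, star_mul, star_star, hQstar, mul_assoc]
  have hSQ : S * Q = (1 - P') * S := by
    rw [← hSPS, mul_assoc _ (star S), hS, mul_one]
  have hFSQ : star F * (S * Q) = 0 := by
    rw [hSQ, ← mul_assoc, ← hP'star, ← star_mul, hP'F, star_zero, zero_mul]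
  have hQSF : Q * star S * F = 0 := by
    simpa [star_mul, hQstar, mul_assoc] using congrArg star hFSQ
  have hFQS : F * (Q * star S) = 0 := by rw [← mul_assoc, hFP, zero_mul]
  have hSQF : S * Q * star F = 0 := by
    rw [mul_assoc, ← hQstar, ← star_mul, hFP, star_zero, mul_zero]
  have hQSSQ : Q * star S * (S * Q) = Q := by
    rw [mul_assoc, ← mul_assoc (star S), hS, one_mul, hQQ]
  have hSQQS : S * Q * (Q * star S) = 1 - P' := by
    rw [mul_assoc, ← mul_assoc Q, hQQ, ← mul_assoc, hSPS]
  simp only [star_add, star_mul, hQstar, add_mul, mul_add, hFSQ, hQSF, hFQS, hSQF, hQSSQ, hSQQS]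
  simp only [Q]
  abel

namespace ContinuousLinearMap

variable {𝕜 E : Type*} [RCLike 𝕜] [NormedAddCommGroup E] [InnerProductSpace 𝕜 E]

theorem reApplyInnerSelf_add (A B : E →L[𝕜] E) (x : E) :
    (A + B).reApplyInnerSelf x = A.reApplyInnerSelf x + B.reApplyInnerSelf x := by
  simp [reApplyInnerSelf_apply, inner_add_left]

theorem reApplyInnerSelf_sub (A B : E →L[𝕜] E) (x : E) :
    (A - B).reApplyInnerSelf x = A.reApplyInnerSelf x - B.reApplyInnerSelf x := by
  simp [reApplyInnerSelf_apply, inner_sub_left]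

variable [CompleteSpace E]

theorem reApplyInnerSelf_adjoint_mul_self (F : E →L[𝕜] E) (x : E) :
    (adjoint F * F).reApplyInnerSelf x = ‖F x‖ ^ 2 :=
  (apply_norm_sq_eq_inner_adjoint_left F x).symm

theorem reApplyInnerSelf_mul_adjoint (F : E →L[𝕜] E) (x : E) :
    (F * adjoint F).reApplyInnerSelf x = ‖adjoint F x‖ ^ 2 := by
  simpa using reApplyInnerSelf_adjoint_mul_self (adjoint F) x

theorem IsStarProjection.reApplyInnerSelf_eq_norm_sq {P : E →L[𝕜] E} (hP : IsStarProjection P)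
    (x : E) : P.reApplyInnerSelf x = ‖P x‖ ^ 2 := by
  rw [← reApplyInnerSelf_adjoint_mul_self, ← star_eq_adjoint, hP.isSelfAdjoint.star_eq,
    hP.isIdempotentElem.eq]

end ContinuousLinearMap

namespace HilbertBasis

variable {ι 𝕜 E : Type*} [RCLike 𝕜] [NormedAddCommGroup E] [InnerProductSpace 𝕜 E]

theorem ext_inner_left (b : HilbertBasis ι 𝕜 E) {x y : E}
    (h : ∀ i, inner 𝕜 (b i) x = inner 𝕜 (b i) y) : x = y :=
  b.repr.injective <| lp.ext <| funext fun i => by simpa [b.repr_apply_apply] using h i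

theorem continuousLinearMap_ext (b : HilbertBasis ι 𝕜 E) {A B : E →L[𝕜] E}
    (h : ∀ i, A (b i) = B (b i)) : A = B :=
  ContinuousLinearMap.ext_on (Submodule.dense_iff_topologicalClosure_eq_top.mpr b.dense_span)
    (by rintro _ ⟨i, rfl⟩; exact h i)

theorem inner_eq_ite [DecidableEq ι] (b : HilbertBasis ι 𝕜 E) (i j : ι) :
    inner 𝕜 (b i) (b j) = if i = j then 1 else 0 :=
  orthonormal_iff_ite.mp b.orthonormal i j

variable [CompleteSpace E]

theorem isStarProjection_of_apply_eq_ite (b : HilbertBasis ι 𝕜 E) (p : ι → Prop)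
    [DecidablePred p] {P : E →L[𝕜] E} (hP : ∀ i, P (b i) = if p i then b i else 0) :
    IsStarProjection P where
  isIdempotentElem := b.continuousLinearMap_ext fun i => by
    by_cases hi : p i <;> simp [hP, hi]
  isSelfAdjoint := b.continuousLinearMap_ext fun i => b.ext_inner_left fun j => by
    classical
    rw [star_eq_adjoint, adjoint_inner_right, hP, hP]
    by_cases hi : p i <;> by_cases hj : p j <;> simp [hi, hj, b.inner_eq_ite] <;> grind

section Shift

variable (b : HilbertBasis ℕ 𝕜 E) {k : ℕ} {S : E →L[𝕜] E} (hS : ∀ m, S (b m) = b (m + k))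
include hS

theorem adjoint_apply_of_shift (m : ℕ) :
    adjoint S (b m) = if k ≤ m then b (m - k) else 0 :=
  b.ext_inner_left fun j => by
    classical
    rw [adjoint_inner_right, hS]
    split_ifs <;> simp only [b.inner_eq_ite, inner_zero_right] <;> grind

theorem adjoint_mul_self_of_shift : adjoint S * S = 1 :=
  b.continuousLinearMap_ext fun m => by
    simp [hS, b.adjoint_apply_of_shift hS]

theorem mul_one_sub_mul_adjoint_of_shift {n : ℕ} {P P' : E →L[𝕜] E}
    (hP : ∀ m, P (b m) = if m < n then b m else 0)
    (hP' : ∀ m, P' (b m) = if m < n + k then b m else 0) :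
    S * (1 - P) * adjoint S = 1 - P' :=
  b.continuousLinearMap_ext fun m => by
    simp only [mul_apply_eq_comp, sub_apply, one_apply_eq_self, b.adjoint_apply_of_shift hS, hP']
    by_cases hkm : k ≤ m
    · by_cases hm : m < n + k
      · simp [hkm, hm, hP, show m - k < n by omega]
      · simp [hkm, hm, hP, hS, show ¬ m - k < n by omega, show m - k + k = m by omega]
    · simp [hkm, show m < n + k by omega]

end Shift

end HilbertBasis

theorem hyponormal_iff_F1_inequality_general
    {H : Type*} [NormedAddCommGroup H] [InnerProductSpace ℂ H] [CompleteSpace H]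
    (e : HilbertBasis ℕ ℂ H) (n k : ℕ)
    (Sk Pn Pnk F₁ T : H →L[ℂ] H)
    (hSk : ∀ m : ℕ, Sk (e m) = e (m + k))
    (hPn : ∀ m : ℕ, Pn (e m) = if m < n then e m else 0)
    (hPnk : ∀ m : ℕ, Pnk (e m) = if m < n + k then e m else 0)
    (hF1 : F₁ * (1 - Pn) = 0) (hF2 : (1 - Pnk) * F₁ = 0)
    (hT : T = F₁ + Sk * (1 - Pn)) :
    (adjoint T * T - T * adjoint T).IsPositive ↔
      ∀ x : H, ‖adjoint F₁ x‖ ^ 2 - ‖F₁ x‖ ^ 2 ≤ ‖Pnk x‖ ^ 2 - ‖Pn x‖ ^ 2 := by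
  have hPn' := e.isStarProjection_of_apply_eq_ite (· < n) hPn
  have hPnk' := e.isStarProjection_of_apply_eq_ite (· < n + k) hPnk
  have hcomm : adjoint T * T - T * adjoint T =
      adjoint F₁ * F₁ - F₁ * adjoint F₁ + (Pnk - Pn) := by
    subst hT
    exact star_mul_self_sub_mul_star_add_mul_one_sub hPn' hF1 hF2
      (e.adjoint_mul_self_of_shift hSk) (e.mul_one_sub_mul_adjoint_of_shift hSk hPn hPnk)
  have hselfAdj : IsSelfAdjoint (adjoint T * T - T * adjoint T) :=
    (IsSelfAdjoint.star_mul_self T).sub (IsSelfAdjoint.mul_star_self T)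
  rw [isPositive_def', and_iff_right hselfAdj, hcomm]
  refine forall_congr' fun x => ?_
  rw [reApplyInnerSelf_add, reApplyInnerSelf_sub, reApplyInnerSelf_sub,
    reApplyInnerSelf_adjoint_mul_self, reApplyInnerSelf_mul_adjoint,
    hPnk'.reApplyInnerSelf_eq_norm_sq, hPn'.reApplyInnerSelf_eq_norm_sq]
  constructor <;> intro h <;> linarith

/-- A contraction `T = F₁ + S_k (I - P_n)` (with `F₁ (I - P_n) = 0`, `(I - P_{n+k}) F₁ = 0`)
is hyponormal iff `‖F₁* x‖² - ‖F₁ x‖² ≤ ‖P_{n+k} x‖² - ‖P_n x‖²` for all `x`. -/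
theorem hyponormal_iff_F1_inequality
    {H : Type*} [NormedAddCommGroup H] [InnerProductSpace ℂ H] [CompleteSpace H]
    (e : HilbertBasis ℕ ℂ H) (n k : ℕ) (hk : 1 ≤ k)
    (Sk Pn Pnk F₁ T : H →L[ℂ] H)
    (hSk : ∀ m : ℕ, Sk (e m) = e (m + k))
    (hPn : ∀ m : ℕ, Pn (e m) = if m < n then e m else 0)
    (hPnk : ∀ m : ℕ, Pnk (e m) = if m < n + k then e m else 0)
    (hF1 : F₁ * (1 - Pn) = 0) (hF2 : (1 - Pnk) * F₁ = 0)
    (hT : T = F₁ + Sk * (1 - Pn)) (hcontr : ‖T‖ ≤ 1) :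
    (adjoint T * T - T * adjoint T).IsPositive ↔
      ∀ x : H, ‖adjoint F₁ x‖ ^ 2 - ‖F₁ x‖ ^ 2 ≤ ‖Pnk x‖ ^ 2 - ‖Pn x‖ ^ 2 :=
  hyponormal_iff_F1_inequality_general e n k Sk Pn Pnk F₁ T hSk hPn hPnk hF1 hF2 hT
end

section
/- Let {e_n}_{n≥0} be an orthonormal basis of H, k ≥ 1, and α₀,…,α_k ∈ ℂ with Σ_{i=0}^k |α_i|² < 1. Define T by T(e₀) = α₀e₀ + α₁e₁ + ⋯ + α_k e_k and T(e_n) = e_{n+k} for n ≥ 1. Then T is a hyponormal contraction: ‖T‖ ≤ 1 and T*T − TT* ≥ 0. -/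
/-! In coordinates `xₙ = ⟪eₙ, x⟫`, Parseval's identity gives
`‖T x‖² = ‖x‖² - (1 - Σ |αᵢ|²) |x₀|²` and `‖T* x‖² = ‖x‖² - Σ_{i ≤ k} |xᵢ|² + |Σ_{i ≤ k} ᾱᵢ xᵢ|²`.
The first makes `T` a contraction. By Cauchy–Schwarz the second is at most
`‖x‖² - (1 - Σ |αᵢ|²) Σ_{i ≤ k} |xᵢ|² ≤ ‖T x‖²`, and `‖T* x‖ ≤ ‖T x‖` for all `x` is exactly
`T*T - TT* ≥ 0`. -/

open ContinuousLinearMap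
open scoped InnerProductSpace ComplexConjugate

section HilbertBasis

variable {ι 𝕜 E : Type*} [RCLike 𝕜] [NormedAddCommGroup E] [InnerProductSpace 𝕜 E]

theorem HilbertBasis.hasSum_norm_inner_sq_s17 (b : HilbertBasis ι 𝕜 E) (x : E) :
    HasSum (fun i => ‖⟪b i, x⟫_𝕜‖ ^ 2) (‖x‖ ^ 2) := by
  simpa [b.repr_apply_apply] using lp.hasSum_norm (p := 2) (by norm_num) (b.repr x)

theorem HilbertBasis.inner_eq_ite_s17 [DecidableEq ι] (b : HilbertBasis ι 𝕜 E) (i j : ι) :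
    ⟪b i, b j⟫_𝕜 = if i = j then 1 else 0 :=
  orthonormal_iff_ite.mp b.orthonormal i j

theorem HilbertBasis.norm_sq_eq_sum_add_tsum (b : HilbertBasis ℕ 𝕜 E) (x : E) (N : ℕ) :
    ‖x‖ ^ 2 = ∑ i ∈ Finset.range N, ‖⟪b i, x⟫_𝕜‖ ^ 2 + ∑' n, ‖⟪b (n + N), x⟫_𝕜‖ ^ 2 := by
  rw [(b.hasSum_norm_inner_sq_s17 x).summable.sum_add_tsum_nat_add, (b.hasSum_norm_inner_sq_s17 x).tsum_eq]

theorem HilbertBasis.map_eq_inner_smul_of_forall_ne {F : Type*} [NormedAddCommGroup F]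
    [NormedSpace 𝕜 F] (b : HilbertBasis ι 𝕜 E) (f : E →L[𝕜] F) {i : ι}
    (h : ∀ j ≠ i, f (b j) = 0) (x : E) : f x = ⟪b i, x⟫_𝕜 • f (b i) := by
  have hx := (b.hasSum_repr x).mapL f
  simp only [map_smul, b.repr_apply_apply] at hx
  exact hx.unique (hasSum_single i fun j hj => by rw [h j hj, smul_zero])

end HilbertBasis

theorem norm_sum_mul_sq_le {ι 𝕜 : Type*} [RCLike 𝕜] (s : Finset ι) (a b : ι → 𝕜) :
    ‖∑ i ∈ s, a i * b i‖ ^ 2 ≤ (∑ i ∈ s, ‖a i‖ ^ 2) * ∑ i ∈ s, ‖b i‖ ^ 2 :=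
  calc ‖∑ i ∈ s, a i * b i‖ ^ 2 ≤ (∑ i ∈ s, ‖a i‖ * ‖b i‖) ^ 2 := by
        gcongr
        exact (norm_sum_le _ _).trans_eq (by simp only [norm_mul])
    _ ≤ _ := Finset.sum_mul_sq_le_sq_mul_sq s _ _

theorem ContinuousLinearMap.isPositive_adjoint_mul_self_sub_adjoint_mul_self
    {𝕜 E : Type*} [RCLike 𝕜] [NormedAddCommGroup E] [InnerProductSpace 𝕜 E] [CompleteSpace E]
    {S T : E →L[𝕜] E} (h : ∀ x, ‖S x‖ ≤ ‖T x‖) : (adjoint T * T - adjoint S * S).IsPositive := by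
  refine isPositive_def'.2 ⟨?_, fun x => ?_⟩
  · simpa only [star_eq_adjoint] using (IsSelfAdjoint.star_mul_self T).sub (.star_mul_self S)
  · have hT := apply_norm_sq_eq_inner_adjoint_left T x
    have hS := apply_norm_sq_eq_inner_adjoint_left S x
    rw [reApplyInnerSelf_apply, sub_apply, inner_sub_left, map_sub, mul_def, mul_def, ← hT, ← hS,
      sub_nonneg]
    gcongr
    exact h x

structure IsPerturbedShift {H : Type*} [NormedAddCommGroup H] [InnerProductSpace ℂ H]
    (e : HilbertBasis ℕ ℂ H) (k : ℕ) (α : ℕ → ℂ) (T : H →L[ℂ] H) : Prop where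
  apply_zero : T (e 0) = ∑ i ∈ Finset.range (k + 1), α i • e i
  apply_of_one_le : ∀ n : ℕ, 1 ≤ n → T (e n) = e (n + k)

namespace IsPerturbedShift

variable {H : Type*} [NormedAddCommGroup H] [InnerProductSpace ℂ H] {e : HilbertBasis ℕ ℂ H}
  {k : ℕ} {α : ℕ → ℂ} {T : H →L[ℂ] H}

theorem inner_apply_basis_zero (hT : IsPerturbedShift e k α T) (m : ℕ) :
    ⟪e m, T (e 0)⟫_ℂ = if m ≤ k then α m else 0 := by
  simp [hT.apply_zero, e.inner_eq_ite_s17]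

theorem inner_apply_of_le (hT : IsPerturbedShift e k α T) {m : ℕ} (hm : m ≤ k) (x : H) :
    ⟪e m, T x⟫_ℂ = α m * ⟪e 0, x⟫_ℂ := by
  have := e.map_eq_inner_smul_of_forall_ne ((innerSL ℂ (e m)).comp T) (i := 0) ?_ x
  · simpa [hT.inner_apply_basis_zero, hm, mul_comm] using this
  · intro j hj
    simp [hT.apply_of_one_le j (by omega), e.inner_eq_ite_s17, show m ≠ j + k by omega]

theorem inner_apply_add (hT : IsPerturbedShift e k α T) (n : ℕ) (x : H) :
    ⟪e (n + (k + 1)), T x⟫_ℂ = ⟪e (n + 1), x⟫_ℂ := by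
  have := e.map_eq_inner_smul_of_forall_ne ((innerSL ℂ (e (n + (k + 1)))).comp T) (i := n + 1) ?_ x
  · simpa [hT.apply_of_one_le (n + 1) (by omega), e.inner_eq_ite_s17, add_right_comm n 1 k,
      add_assoc, e.orthonormal.norm_eq_one] using this
  · intro j hj
    rcases Nat.eq_zero_or_pos j with rfl | hj0
    · simp [hT.inner_apply_basis_zero, show ¬n + (k + 1) ≤ k by omega]
    · simp [hT.apply_of_one_le j hj0, e.inner_eq_ite_s17, show n + (k + 1) ≠ j + k by omega]

theorem norm_apply_sq (hT : IsPerturbedShift e k α T) (x : H) :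
    ‖T x‖ ^ 2 = ‖x‖ ^ 2 - (1 - ∑ i ∈ Finset.range (k + 1), ‖α i‖ ^ 2) * ‖⟪e 0, x⟫_ℂ‖ ^ 2 := by
  rw [e.norm_sq_eq_sum_add_tsum (T x) (k + 1), e.norm_sq_eq_sum_add_tsum x 1,
    Finset.sum_congr rfl fun i hi => by
      rw [hT.inner_apply_of_le (Nat.lt_succ_iff.mp (Finset.mem_range.mp hi)), norm_mul, mul_pow]]
  simp only [hT.inner_apply_add, Finset.sum_range_one, ← Finset.sum_mul]
  ring

theorem norm_apply_le (hT : IsPerturbedShift e k α T)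
    (hα : ∑ i ∈ Finset.range (k + 1), ‖α i‖ ^ 2 ≤ 1) (x : H) : ‖T x‖ ≤ ‖x‖ := by
  refine (pow_le_pow_iff_left₀ (norm_nonneg _) (norm_nonneg _) two_ne_zero).mp ?_
  rw [hT.norm_apply_sq]
  exact sub_le_self _ (mul_nonneg (sub_nonneg.mpr hα) (sq_nonneg _))

variable [CompleteSpace H]

theorem inner_adjoint_apply_zero (hT : IsPerturbedShift e k α T) (x : H) :
    ⟪e 0, adjoint T x⟫_ℂ = ∑ i ∈ Finset.range (k + 1), conj (α i) * ⟪e i, x⟫_ℂ := by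
  simp [adjoint_inner_right, hT.apply_zero, sum_inner, inner_smul_left]

theorem inner_adjoint_apply_add_one (hT : IsPerturbedShift e k α T) (n : ℕ) (x : H) :
    ⟪e (n + 1), adjoint T x⟫_ℂ = ⟪e (n + (k + 1)), x⟫_ℂ := by
  rw [adjoint_inner_right, hT.apply_of_one_le _ (by omega), add_right_comm, add_assoc]

theorem norm_adjoint_apply_sq (hT : IsPerturbedShift e k α T) (x : H) :
    ‖adjoint T x‖ ^ 2 = ‖x‖ ^ 2 - ∑ i ∈ Finset.range (k + 1), ‖⟪e i, x⟫_ℂ‖ ^ 2 +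
      ‖∑ i ∈ Finset.range (k + 1), conj (α i) * ⟪e i, x⟫_ℂ‖ ^ 2 := by
  rw [e.norm_sq_eq_sum_add_tsum (adjoint T x) 1, e.norm_sq_eq_sum_add_tsum x (k + 1)]
  simp only [hT.inner_adjoint_apply_add_one, Finset.sum_range_one, hT.inner_adjoint_apply_zero]
  ring

theorem norm_adjoint_apply_le_norm_apply (hT : IsPerturbedShift e k α T)
    (hα : ∑ i ∈ Finset.range (k + 1), ‖α i‖ ^ 2 ≤ 1) (x : H) : ‖adjoint T x‖ ≤ ‖T x‖ := by
  set A := ∑ i ∈ Finset.range (k + 1), ‖α i‖ ^ 2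
  set S := ∑ i ∈ Finset.range (k + 1), ‖⟪e i, x⟫_ℂ‖ ^ 2
  have cauchy_schwarz :
      ‖∑ i ∈ Finset.range (k + 1), conj (α i) * ⟪e i, x⟫_ℂ‖ ^ 2 ≤ A * S := by
    simpa only [RCLike.norm_conj] using norm_sum_mul_sq_le _ (fun i => conj (α i)) _
  have head_le : ‖⟪e 0, x⟫_ℂ‖ ^ 2 ≤ S :=
    Finset.single_le_sum (f := fun i => ‖⟪e i, x⟫_ℂ‖ ^ 2) (fun i _ => sq_nonneg _)
      (Finset.mem_range.mpr k.succ_pos)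
  refine (pow_le_pow_iff_left₀ (norm_nonneg _) (norm_nonneg _) two_ne_zero).mp ?_
  rw [hT.norm_apply_sq, hT.norm_adjoint_apply_sq]
  nlinarith [mul_le_mul_of_nonneg_left head_le (sub_nonneg.mpr hα)]

end IsPerturbedShift

theorem rank_one_perturbation_hyponormal_general
    {H : Type*} [NormedAddCommGroup H] [InnerProductSpace ℂ H] [CompleteSpace H]
    (e : HilbertBasis ℕ ℂ H) (k : ℕ) (α : ℕ → ℂ)
    (hα : ∑ i ∈ Finset.range (k + 1), ‖α i‖ ^ 2 < 1)
    (T : H →L[ℂ] H)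
    (hT0 : T (e 0) = ∑ i ∈ Finset.range (k + 1), α i • e i)
    (hTn : ∀ n : ℕ, 1 ≤ n → T (e n) = e (n + k)) :
    ‖T‖ ≤ 1 ∧ (adjoint T * T - T * adjoint T).IsPositive := by
  have hT : IsPerturbedShift e k α T := ⟨hT0, hTn⟩
  refine ⟨opNorm_le_bound T zero_le_one fun x => ?_, ?_⟩
  · simpa only [one_mul] using hT.norm_apply_le hα.le x
  · simpa only [adjoint_adjoint] using
      isPositive_adjoint_mul_self_sub_adjoint_mul_self (hT.norm_adjoint_apply_le_norm_apply hα.le)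

/-- For `k ≥ 1` and `α₀, …, α_k` with `Σ |α i|² < 1`, the operator defined by
`T e₀ = Σ α i • e i` and `T e_n = e_{n+k}` for `n ≥ 1` is a hyponormal contraction. -/
theorem rank_one_perturbation_hyponormal
    {H : Type*} [NormedAddCommGroup H] [InnerProductSpace ℂ H] [CompleteSpace H]
    (e : HilbertBasis ℕ ℂ H) (k : ℕ) (hk : 1 ≤ k) (α : ℕ → ℂ)
    (hα : ∑ i ∈ Finset.range (k + 1), ‖α i‖ ^ 2 < 1)
    (T : H →L[ℂ] H)
    (hT0 : T (e 0) = ∑ i ∈ Finset.range (k + 1), α i • e i)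
    (hTn : ∀ n : ℕ, 1 ≤ n → T (e n) = e (n + k)) :
    ‖T‖ ≤ 1 ∧ (adjoint T * T - T * adjoint T).IsPositive :=
  rank_one_perturbation_hyponormal_general e k α hα T hT0 hTn
end

section
/- Let {e_n}_{n≥0} be an orthonormal basis of H, k ≥ 1, α₀,…,α_k ∈ ℂ with Σ|α_i|² < 1, and define T(e₀) = α₀e₀ + ⋯ + α_k e_k, T(e_n) = e_{n+k} for n ≥ 1. Then dim D_T = 1; in fact I − T*T = (1 − Σ_{i=0}^k |α_i|²) · (projection onto ℂe₀). -/
/-!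
The image `T e₀ = Σ_{i ≤ k} αᵢ eᵢ` lies in the span of `e₀, …, e_k`, while `T` maps the remaining
basis vectors `e_n` (`n ≥ 1`) isometrically onto `e_{n+k}`, all orthogonal to it. So the matrix
`⟪T e_m, T e_n⟫` agrees with the identity except at `(0, 0)`, where it is `Σ |αᵢ|²`; this gives
`I - T*T = (1 - Σ |αᵢ|²) Q`. For the self-adjoint `DT`, the closure of the range is
`(ker DT)ᗮ = (ker DT²)ᗮ = (ker Q)ᗮ = ℂ e₀`, since `1 - Σ |αᵢ|² ≠ 0`.
-/

open ContinuousLinearMap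
open scoped InnerProductSpace

section

variable {𝕜 E ι : Type*} [RCLike 𝕜] [NormedAddCommGroup E] [InnerProductSpace 𝕜 E]

theorem Orthonormal.inner_sum_smul_eq_zero_of_notMem {v : ι → E} (hv : Orthonormal 𝕜 v)
    (l : ι → 𝕜) {s : Finset ι} {j : ι} (hj : j ∉ s) : ⟪∑ i ∈ s, l i • v i, v j⟫_𝕜 = 0 := by
  rw [sum_inner]
  exact Finset.sum_eq_zero fun i hi => by
    rw [inner_smul_left, hv.2 (ne_of_mem_of_not_mem hi hj), mul_zero]

theorem Orthonormal.inner_sum_smul_self {v : ι → E} (hv : Orthonormal 𝕜 v) (l : ι → 𝕜)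
    (s : Finset ι) :
    ⟪∑ i ∈ s, l i • v i, ∑ i ∈ s, l i • v i⟫_𝕜 = ((∑ i ∈ s, ‖l i‖ ^ 2 : ℝ) : 𝕜) := by
  rw [hv.inner_sum]
  push_cast
  simp [RCLike.conj_mul]

theorem HilbertBasis.ext_inner_apply (b : HilbertBasis ι 𝕜 E) {A B : E →L[𝕜] E}
    (h : ∀ m n, ⟪b m, A (b n)⟫_𝕜 = ⟪b m, B (b n)⟫_𝕜) : A = B := by
  refine ext_on (Submodule.dense_iff_topologicalClosure_eq_top.mpr b.dense_span) ?_
  rintro _ ⟨n, rfl⟩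
  apply b.repr.injective
  ext m
  rw [b.repr_apply_apply, b.repr_apply_apply, h]

theorem HilbertBasis.eq_starProjection_of_apply_eq_ite [DecidableEq ι] (b : HilbertBasis ι 𝕜 E)
    (i : ι) {Q : E →L[𝕜] E} (hQ : ∀ m, Q (b m) = if m = i then b i else 0) :
    Q = (𝕜 ∙ b i).starProjection := by
  refine b.ext_inner_apply fun m n => ?_
  rw [hQ, Submodule.starProjection_unit_singleton 𝕜 (b.orthonormal.1 i),
    inner_smul_right, orthonormal_iff_ite.mp b.orthonormal]
  by_cases hn : n = i
  · subst hn; simp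
  · simp [hn, Ne.symm hn]

theorem IsSelfAdjoint.topologicalClosure_range_eq_orthogonal_ker_mul_self [CompleteSpace E]
    {A : E →L[𝕜] E} (hA : IsSelfAdjoint A) :
    (LinearMap.range (A : E →ₗ[𝕜] E)).topologicalClosure =
      (LinearMap.ker (↑(A * A) : E →ₗ[𝕜] E))ᗮ := by
  have hA' : adjoint A = A := hA
  have hker := ker_adjoint_comp_self A
  rw [hA'] at hker
  rw [mul_def, hker, orthogonal_ker, hA']

section ShiftPerturbation

variable {v : ℕ → E} {k : ℕ} {α : ℕ → 𝕜} {T : E →L[𝕜] E}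

theorem inner_sub_inner_apply_apply_eq_ite (hv : Orthonormal 𝕜 v)
    (hT0 : T (v 0) = ∑ i ∈ Finset.range (k + 1), α i • v i)
    (hTn : ∀ n, 1 ≤ n → T (v n) = v (n + k)) (m n : ℕ) :
    ⟪v m, v n⟫_𝕜 - ⟪T (v m), T (v n)⟫_𝕜 =
      if m = 0 ∧ n = 0 then ((1 - ∑ i ∈ Finset.range (k + 1), ‖α i‖ ^ 2 : ℝ) : 𝕜) else 0 := by
  have hv' := orthonormal_iff_ite.mp hv
  have hfar : ∀ n, 1 ≤ n → n + k ∉ Finset.range (k + 1) := fun n hn => by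
    rw [Finset.mem_range]; omega
  rcases Nat.eq_zero_or_pos m with rfl | hm <;> rcases Nat.eq_zero_or_pos n with rfl | hn
  · rw [hT0, hv.inner_sum_smul_self, hv' 0 0]
    simp
  · rw [hT0, hTn n hn, hv.inner_sum_smul_eq_zero_of_notMem α (hfar n hn)]
    simp [hv', hn.ne, hn.ne']
  · rw [hT0, hTn m hm, inner_eq_zero_symm.mp (hv.inner_sum_smul_eq_zero_of_notMem α (hfar m hm))]
    simp [hv', hm.ne']
  · simp [hTn m hm, hTn n hn, hv', hm.ne']

theorem one_sub_adjoint_mul_self_eq_smul [CompleteSpace E] (b : HilbertBasis ℕ 𝕜 E)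
    (hT0 : T (b 0) = ∑ i ∈ Finset.range (k + 1), α i • b i)
    (hTn : ∀ n, 1 ≤ n → T (b n) = b (n + k)) {Q : E →L[𝕜] E}
    (hQ : ∀ m, Q (b m) = if m = 0 then b 0 else 0) :
    1 - adjoint T * T = ((1 - ∑ i ∈ Finset.range (k + 1), ‖α i‖ ^ 2 : ℝ) : 𝕜) • Q := by
  refine b.ext_inner_apply fun m n => ?_
  rw [sub_apply, one_apply_eq_self, inner_sub_right, mul_apply_eq_comp, adjoint_inner_right,
    inner_sub_inner_apply_apply_eq_ite b.orthonormal hT0 hTn, smul_apply, inner_smul_right, hQ]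
  by_cases hn : n = 0
  · simp [hn, orthonormal_iff_ite.mp b.orthonormal]
  · simp [hn]

end ShiftPerturbation

end

theorem rank_one_perturbation_defect_dim_one_general
    {H : Type*} [NormedAddCommGroup H] [InnerProductSpace ℂ H] [CompleteSpace H]
    (e : HilbertBasis ℕ ℂ H) (k : ℕ) (α : ℕ → ℂ)
    (hα : ∑ i ∈ Finset.range (k + 1), ‖α i‖ ^ 2 < 1)
    (T DT Q : H →L[ℂ] H)
    (hT0 : T (e 0) = ∑ i ∈ Finset.range (k + 1), α i • e i)
    (hTn : ∀ n : ℕ, 1 ≤ n → T (e n) = e (n + k))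
    (hQ : ∀ m : ℕ, Q (e m) = if m = 0 then e 0 else 0)
    (hDTpos : DT.IsPositive) (hDT : DT * DT = 1 - adjoint T * T) :
    1 - adjoint T * T = (1 - ∑ i ∈ Finset.range (k + 1), ‖α i‖ ^ 2 : ℝ) • Q ∧
      Module.finrank ℂ ((LinearMap.range (DT : H →ₗ[ℂ] H)).topologicalClosure) = 1 := by
  have hdefect := one_sub_adjoint_mul_self_eq_smul e hT0 hTn hQ
  refine ⟨by rwa [RCLike.real_smul_eq_coe_smul (K := ℂ)], ?_⟩
  rw [hDTpos.isSelfAdjoint.topologicalClosure_range_eq_orthogonal_ker_mul_self, hDT, hdefect,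
    toLinearMap_smul, LinearMap.ker_smul _ _ ?_,
    e.eq_starProjection_of_apply_eq_ite 0 hQ, Submodule.ker_starProjection,
    Submodule.orthogonal_orthogonal]
  · exact finrank_span_singleton (e.orthonormal.ne_zero 0)
  · exact RCLike.ofReal_ne_zero.mpr (sub_pos.mpr hα).ne'

/-- For `k ≥ 1`, `Σ |α i|² < 1`, and `T e₀ = Σ α i • e i`, `T e_n = e_{n+k}` (`n ≥ 1`),
one has `I - T*T = (1 - Σ |α i|²) Q`, where `Q` is the orthogonal projection onto `ℂ e₀`;
hence the defect space `D_T` (the closure of the range of the positive square root `DT`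
of `I - T*T`) is one-dimensional. -/
theorem rank_one_perturbation_defect_dim_one
    {H : Type*} [NormedAddCommGroup H] [InnerProductSpace ℂ H] [CompleteSpace H]
    (e : HilbertBasis ℕ ℂ H) (k : ℕ) (hk : 1 ≤ k) (α : ℕ → ℂ)
    (hα : ∑ i ∈ Finset.range (k + 1), ‖α i‖ ^ 2 < 1)
    (T DT Q : H →L[ℂ] H)
    (hT0 : T (e 0) = ∑ i ∈ Finset.range (k + 1), α i • e i)
    (hTn : ∀ n : ℕ, 1 ≤ n → T (e n) = e (n + k))
    (hQ : ∀ m : ℕ, Q (e m) = if m = 0 then e 0 else 0)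
    (hDTpos : DT.IsPositive) (hDT : DT * DT = 1 - adjoint T * T) :
    1 - adjoint T * T = (1 - ∑ i ∈ Finset.range (k + 1), ‖α i‖ ^ 2 : ℝ) • Q ∧
      Module.finrank ℂ ((LinearMap.range (DT : H →ₗ[ℂ] H)).topologicalClosure) = 1 :=
  rank_one_perturbation_defect_dim_one_general e k α hα T DT Q hT0 hTn hQ hDTpos hDT
end
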